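/- If H is a partial cube and E_f is a Θ-class of H, then the graph H \ E_f obtained by deleting the edges of E_f has exactly two connected components. -/

import Mathlib

open SimpleGraph

/-- The hypercube graph `Q_d` on `{0,1}^d`: two vertices are adjacent iff they
differ in exactly one coordinate. -/
def hypercubeGraph (d : ℕ) : SimpleGraph (Fin d → Bool) where
  Adj x y := hammingDist x y = 1
  symm := by
    constructor
    intro x y h
    rwa [hammingDist_comm]
  loopless := by
    constructor
    intro x h
    simp [hammingDist_self] at h

/-- A partial cube: a connected simple graph admitting an isometric embedding
into some hypercube. -/
def IsPartialCube {V : Type} (G : SimpleGraph V) : Prop :=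
  G.Connected ∧
    ∃ (d : ℕ) (φ : V → (Fin d → Bool)), Function.Injective φ ∧
      ∀ v w : V, (hypercubeGraph d).dist (φ v) (φ w) = G.dist v w

/-- The Djoković–Winkler relation `Θ` on (unordered) edges: `e = xy` and
`f = uv` are related iff `d(x,u) + d(y,v) ≠ d(x,v) + d(y,u)`. -/
def DWRel {V : Type} (G : SimpleGraph V) (e f : Sym2 V) : Prop :=
  ∃ x y u v : V, e = s(x, y) ∧ f = s(u, v) ∧
    G.dist x u + G.dist y v ≠ G.dist x v + G.dist y u

/-- A `Θ`-class of `G`: the set of all edges of `G` related to some fixed edge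
`e` of `G` by the Djoković–Winkler relation. -/
def IsThetaClass {V : Type} (G : SimpleGraph V) (C : Set (Sym2 V)) : Prop :=
  ∃ e ∈ G.edgeSet, C = {f | f ∈ G.edgeSet ∧ DWRel G e f}

/-! An isometric embedding `φ` of `H` into a hypercube sends every edge to a pair of words
differing in exactly one coordinate, and for an edge `ab` flipping coordinate `i` the
Djoković–Winkler sum `d(a,u) + d(b,v) - d(a,v) - d(b,u)` equals `±2` or `0` according to whether
`uv` flips `i` or not. So the `Θ`-class of `ab` is the set of edges flipping `i`. After deleting
it, walks preserve coordinate `i`, while a geodesic between two vertices agreeing at `i` never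
flips it, since each of its steps must decrease the Hamming distance to the target. Hence the
components of `H \ E_f` are the two fibres of `v ↦ φ v i`. -/

theorem hammingDist_eq_one_iff {ι β : Type*} [Fintype ι] [DecidableEq β] {x y : ι → β} :
    hammingDist x y = 1 ↔ ∃ i, ∀ k, x k ≠ y k ↔ k = i := by
  simp only [hammingDist, Finset.card_eq_one, Finset.ext_iff, Finset.mem_filter,
    Finset.mem_univ, true_and, Finset.mem_singleton]

theorem Function.ne_update_iff {ι β : Type*} [DecidableEq ι] (x : ι → β) {i : ι} {b : β}
    (hb : x i ≠ b) (k : ι) : x k ≠ Function.update x i b k ↔ k = i := by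
  by_cases hk : k = i
  · subst hk; simpa using hb
  · simp [hk]

section Bool

variable {ι : Type*} [Fintype ι] [DecidableEq ι] {x y : ι → Bool} {i : ι}

theorem hammingDist_eq_of_ne_iff (hxy : ∀ k, x k ≠ y k ↔ k = i) (z : ι → Bool) :
    (hammingDist y z : ℤ) = hammingDist x z + if x i = z i then 1 else -1 := by
  have split (w : ι → Bool) : (hammingDist w z : ℤ) = (if w i ≠ z i then 1 else 0) +
      ∑ k ∈ Finset.univ.erase i, if w k ≠ z k then 1 else 0 := by
    rw [hammingDist, Finset.card_filter]
    exact_mod_cast (Finset.add_sum_erase _ _ (Finset.mem_univ i)).symm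
  have hrest : ∀ k ∈ Finset.univ.erase i,
      (if y k ≠ z k then 1 else 0 : ℤ) = if x k ≠ z k then 1 else 0 := fun k hk => by
    rw [not_not.mp ((hxy k).not.mpr (Finset.ne_of_mem_erase hk))]
  have hi : x i ≠ y i := (hxy i).mpr rfl
  rw [split x, split y, Finset.sum_congr rfl hrest]
  revert hi
  cases x i <;> cases y i <;> cases z i <;> simp <;> ring

theorem hammingDist_add_ne_iff_of_ne_iff (hxy : ∀ k, x k ≠ y k ↔ k = i) (u w : ι → Bool) :
    hammingDist x u + hammingDist y w ≠ hammingDist x w + hammingDist y u ↔ u i ≠ w i := by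
  rw [← (Nat.cast_injective (R := ℤ)).ne_iff]
  push_cast
  rw [hammingDist_eq_of_ne_iff hxy u, hammingDist_eq_of_ne_iff hxy w]
  cases x i <;> cases u i <;> cases w i <;> simp <;> omega

end Bool

theorem hypercubeGraph_adj {d : ℕ} {x y : Fin d → Bool} :
    (hypercubeGraph d).Adj x y ↔ hammingDist x y = 1 := Iff.rfl

theorem hammingDist_le_length {d : ℕ} {x y : Fin d → Bool} (p : (hypercubeGraph d).Walk x y) :
    hammingDist x y ≤ p.length := by
  induction p with
  | nil => simp
  | @cons x z y h p ih =>
    calc hammingDist x y ≤ hammingDist x z + hammingDist z y := hammingDist_triangle x z y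
      _ ≤ p.length + 1 := by rw [hypercubeGraph_adj.mp h]; omega
      _ = _ := (Walk.length_cons h p).symm

theorem exists_walk_length_eq_hammingDist {d : ℕ} (x y : Fin d → Bool) :
    ∃ p : (hypercubeGraph d).Walk x y, p.length = hammingDist x y := by
  induction hn : hammingDist x y generalizing x with
  | zero => obtain rfl := hammingDist_eq_zero.mp hn; exact ⟨.nil, rfl⟩
  | succ n ih =>
    obtain ⟨i, hi⟩ : ∃ i, x i ≠ y i :=
      Function.ne_iff.mp (hammingDist_ne_zero.mp (by omega))
    have hx' := Function.ne_update_iff x hi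
    have hadj : (hypercubeGraph d).Adj x (Function.update x i (y i)) :=
      hypercubeGraph_adj.mpr (hammingDist_eq_one_iff.mpr ⟨i, hx'⟩)
    have hstep : hammingDist (Function.update x i (y i)) y = n := by
      have := hammingDist_eq_of_ne_iff hx' y
      simp only [hi, if_false] at this
      omega
    obtain ⟨p, hp⟩ := ih _ hstep
    exact ⟨.cons hadj p, by simp [hp]⟩

theorem hypercubeGraph_dist {d : ℕ} (x y : Fin d → Bool) :
    (hypercubeGraph d).dist x y = hammingDist x y := by
  obtain ⟨p, hp⟩ := exists_walk_length_eq_hammingDist x y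
  obtain ⟨q, hq⟩ := p.reachable.exists_walk_length_eq_dist
  exact le_antisymm (hp ▸ dist_le p) (hq ▸ hammingDist_le_length q)

section HammingIsometry

variable {V : Type} {G : SimpleGraph V} {d : ℕ} {φ : V → Fin d → Bool} {u v : V} {i : Fin d}

theorem exists_ne_iff_of_adj (hφ : ∀ u v, G.dist u v = hammingDist (φ u) (φ v))
    (h : G.Adj u v) : ∃ i, ∀ k, φ u k ≠ φ v k ↔ k = i :=
  hammingDist_eq_one_iff.mp (hφ u v ▸ dist_eq_one_iff_adj.mpr h)

theorem dwRel_iff (hφ : ∀ u v, G.dist u v = hammingDist (φ u) (φ v)) {a b : V}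
    (hab : ∀ k, φ a k ≠ φ b k ↔ k = i) : DWRel G s(a, b) s(u, v) ↔ φ u i ≠ φ v i := by
  have hba : ∀ k, φ b k ≠ φ a k ↔ k = i := fun k => ne_comm.trans (hab k)
  constructor
  · rintro ⟨x, y, p, q, hxy, hpq, hne⟩
    simp only [hφ] at hne
    have hpq' : φ p i ≠ φ q i := by
      rcases Sym2.eq_iff.mp hxy with ⟨rfl, rfl⟩ | ⟨rfl, rfl⟩
      · exact (hammingDist_add_ne_iff_of_ne_iff hab _ _).mp hne
      · exact (hammingDist_add_ne_iff_of_ne_iff hba _ _).mp hne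
    rcases Sym2.eq_iff.mp hpq with ⟨rfl, rfl⟩ | ⟨rfl, rfl⟩
    · exact hpq'
    · exact hpq'.symm
  · intro huv
    refine ⟨a, b, u, v, rfl, rfl, ?_⟩
    simpa only [hφ] using (hammingDist_add_ne_iff_of_ne_iff hab _ _).mpr huv

theorem mem_dwRelClass_iff (hφ : ∀ u v, G.dist u v = hammingDist (φ u) (φ v)) {a b : V}
    (hab : ∀ k, φ a k ≠ φ b k ↔ k = i) (huv : G.Adj u v) :
    s(u, v) ∈ {f | f ∈ G.edgeSet ∧ DWRel G s(a, b) f} ↔ φ u i ≠ φ v i :=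
  (and_iff_right (G.mem_edgeSet.mpr huv)).trans (dwRel_iff hφ hab)

variable {C : Set (Sym2 V)}

theorem eq_of_reachable_deleteEdges
    (hC : ∀ u v, G.Adj u v → (s(u, v) ∈ C ↔ φ u i ≠ φ v i))
    (h : (G.deleteEdges C).Reachable u v) : φ u i = φ v i := by
  obtain ⟨p⟩ := h
  induction p with
  | nil => rfl
  | cons h _ ih =>
    rw [deleteEdges_adj] at h
    exact (not_not.mp ((hC _ _ h.1).not.mp h.2)).trans ih

theorem reachable_deleteEdges_of_length_le (hφ : ∀ u v, G.dist u v = hammingDist (φ u) (φ v))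
    (hC : ∀ u v, G.Adj u v → (s(u, v) ∈ C ↔ φ u i ≠ φ v i)) (p : G.Walk u v)
    (hp : p.length ≤ hammingDist (φ u) (φ v)) (h : φ u i = φ v i) :
    (G.deleteEdges C).Reachable u v := by
  induction p with
  | nil => rfl
  | @cons u w v hadj q ih =>
    obtain ⟨j, hj⟩ := exists_ne_iff_of_adj hφ hadj
    have hq : hammingDist (φ w) (φ v) ≤ q.length := hφ w v ▸ dist_le q
    have hflip := hammingDist_eq_of_ne_iff hj (φ v)
    -- flipping coordinate `i` would take the walk one step away from `v`
    have hji : j ≠ i := by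
      rintro rfl
      simp only [h, if_true, Walk.length_cons] at hflip hp
      omega
    have huw : φ u i = φ w i := not_not.mp ((hj i).not.mpr hji.symm)
    have htri := hammingDist_triangle (φ u) (φ w) (φ v)
    have huw1 : hammingDist (φ u) (φ w) = 1 := hφ u w ▸ dist_eq_one_iff_adj.mpr hadj
    have hstep : (G.deleteEdges C).Adj u w :=
      deleteEdges_adj.mpr ⟨hadj, (hC u w hadj).not.mpr (not_not.mpr huw)⟩
    exact hstep.reachable.trans (ih (by simp only [Walk.length_cons] at hp; omega) (huw ▸ h))

theorem reachable_deleteEdges_iff (hG : G.Connected)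
    (hφ : ∀ u v, G.dist u v = hammingDist (φ u) (φ v))
    (hC : ∀ u v, G.Adj u v → (s(u, v) ∈ C ↔ φ u i ≠ φ v i)) :
    (G.deleteEdges C).Reachable u v ↔ φ u i = φ v i := by
  refine ⟨eq_of_reachable_deleteEdges hC, fun h => ?_⟩
  obtain ⟨p, hp⟩ := hG.exists_walk_length_eq_dist u v
  exact reachable_deleteEdges_of_length_le hφ hC p (hp.trans (hφ u v)).le h

end HammingIsometry

theorem exists_two_connectedComponents_of_reachable_iff {V : Type*} {G : SimpleGraph V}
    (f : V → Bool) (hf : ∀ u v, G.Reachable u v ↔ f u = f v) {a b : V} (hab : f a ≠ f b) :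
    ∃ c₁ c₂ : G.ConnectedComponent, c₁ ≠ c₂ ∧ ∀ c, c = c₁ ∨ c = c₂ := by
  refine ⟨G.connectedComponentMk a, G.connectedComponentMk b, ?_, fun c => ?_⟩
  · rwa [ne_eq, ConnectedComponent.eq, hf]
  · induction c using ConnectedComponent.ind with | _ v => ?_
    simp only [ConnectedComponent.eq, hf]
    revert hab
    cases f v <;> cases f a <;> cases f b <;> simp

/-- If `H` is a partial cube and `E_f` is a `Θ`-class of `H`, then the graph
`H \ E_f` obtained by deleting the edges of `E_f` has exactly two connected
components. -/
theorem deleteEdges_thetaClass_two_components {V : Type} (H : SimpleGraph V)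
    (hH : IsPartialCube H) (C : Set (Sym2 V)) (hC : IsThetaClass H C) :
    ∃ c₁ c₂ : (H.deleteEdges C).ConnectedComponent, c₁ ≠ c₂ ∧
      ∀ c : (H.deleteEdges C).ConnectedComponent, c = c₁ ∨ c = c₂ := by
  obtain ⟨hconn, d, φ, -, hφ⟩ := hH
  replace hφ : ∀ u v, H.dist u v = hammingDist (φ u) (φ v) := fun u v => by
    rw [← hφ, hypercubeGraph_dist]
  obtain ⟨e, he, rfl⟩ := hC
  induction e using Sym2.ind with | _ a b => ?_
  obtain ⟨i, hi⟩ := exists_ne_iff_of_adj hφ (H.mem_edgeSet.mp he)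
  exact exists_two_connectedComponents_of_reachable_iff (φ · i)
    (fun u v => reachable_deleteEdges_iff hconn hφ fun _ _ => mem_dwRelClass_iff hφ hi)
    ((hi i).mpr rfl)
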